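/- arXiv:2605.28280 — 9 statements merged into one kernel-verified Lean document; each statement's English description precedes it below -/
import Mathlib

section
/- Let D = (d_1, ..., d_n) be nonincreasing with d_1 < n and m the maximum strong index. The corrected conjugate satisfies: bar{d}_i = d*_i - 1 for i ≤ m, bar{d}_{m+1} = m, and bar{d}_i = d*_{i-1} for m+1 < i ≤ d_1 + 1. -/
/-- Conjugate: `d*_i = |{j ∈ [1..n] : d j ≥ i}|`. -/
def conj (n : ℕ) (d : ℕ → ℕ) (i : ℕ) : ℕ :=
  ((Finset.Icc 1 n).filter (fun j => i ≤ d j)).card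

/-- Corrected conjugate:
`bar d_i = |{j ∈ [1..n] : j < i, d j ≥ i - 1}| + |{j ∈ [1..n] : j > i, d j ≥ i}|`. -/
def corrConj (n : ℕ) (d : ℕ → ℕ) (i : ℕ) : ℕ :=
  ((Finset.Icc 1 n).filter (fun j => j < i ∧ i - 1 ≤ d j)).card +
    ((Finset.Icc 1 n).filter (fun j => i < j ∧ i ≤ d j)).card

theorem stmt_2 (n : ℕ) (d : ℕ → ℕ) (hn : 1 ≤ n)
    (hpos : ∀ i, 1 ≤ i → i ≤ n → 1 ≤ d i)
    (hmono : ∀ i j, 1 ≤ i → i ≤ j → j ≤ n → d j ≤ d i)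
    (h1 : d 1 < n)
    (m : ℕ) (hm1 : 1 ≤ m) (hmn : m ≤ n) (hms : m ≤ d m)
    (hmax : ∀ i, 1 ≤ i → i ≤ n → i ≤ d i → i ≤ m) :
    (∀ i, 1 ≤ i → i ≤ m → corrConj n d i = conj n d i - 1) ∧
      corrConj n d (m + 1) = m ∧
      (∀ i, m + 1 < i → i ≤ d 1 + 1 → corrConj n d i = conj n d (i - 1)) := by
  -- every j ≤ m has d j ≥ m
  have key : ∀ j, 1 ≤ j → j ≤ m → m ≤ d j := fun j h1j hjm =>
    hms.trans (hmono j m h1j hjm hmn)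
  refine ⟨?_, ?_, ?_⟩
  · intro i hi1 him
    have hA : ((Finset.Icc 1 n).filter (fun j => j < i ∧ i - 1 ≤ d j)).card = i - 1 := by
      have heq : ((Finset.Icc 1 n).filter (fun j => j < i ∧ i - 1 ≤ d j))
          = Finset.Icc 1 (i - 1) := by
        ext j
        simp only [Finset.mem_filter, Finset.mem_Icc]
        constructor
        · rintro ⟨⟨h1j, hjn⟩, hji, _⟩; exact ⟨h1j, by omega⟩
        · rintro ⟨h1j, hji⟩
          have hjm : j ≤ m := by omega
          have hd := key j h1j hjm
          exact ⟨⟨h1j, by omega⟩, by omega, by omega⟩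
      rw [heq, Nat.card_Icc]; omega
    have hsplit : conj n d i
        = i + ((Finset.Icc 1 n).filter (fun j => i < j ∧ i ≤ d j)).card := by
      unfold conj
      have heq : (Finset.Icc 1 n).filter (fun j => i ≤ d j)
          = Finset.Icc 1 i ∪ (Finset.Icc 1 n).filter (fun j => i < j ∧ i ≤ d j) := by
        ext j
        simp only [Finset.mem_filter, Finset.mem_Icc, Finset.mem_union]
        constructor
        · rintro ⟨⟨h1j, hjn⟩, hd⟩
          rcases le_or_gt j i with h | h
          · exact Or.inl ⟨h1j, h⟩
          · exact Or.inr ⟨⟨h1j, hjn⟩, h, hd⟩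
        · rintro (⟨h1j, hji⟩ | ⟨⟨h1j, hjn⟩, hij, hd⟩)
          · have hjm : j ≤ m := by omega
            have hd := key j h1j hjm
            exact ⟨⟨h1j, by omega⟩, by omega⟩
          · exact ⟨⟨h1j, hjn⟩, hd⟩
      rw [heq, Finset.card_union_of_disjoint, Nat.card_Icc]
      · omega
      · rw [Finset.disjoint_left]
        intro j hj hj'
        simp only [Finset.mem_filter, Finset.mem_Icc] at hj hj'
        omega
    unfold corrConj
    omega
  · unfold corrConj
    have hA : ((Finset.Icc 1 n).filter (fun j => j < m + 1 ∧ m + 1 - 1 ≤ d j))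
        = Finset.Icc 1 m := by
      ext j
      simp only [Finset.mem_filter, Finset.mem_Icc]
      constructor
      · rintro ⟨⟨h1j, hjn⟩, hji, _⟩; exact ⟨h1j, by omega⟩
      · rintro ⟨h1j, hji⟩
        have hd := key j h1j hji
        exact ⟨⟨h1j, by omega⟩, by omega, by omega⟩
    have hB : ((Finset.Icc 1 n).filter (fun j => m + 1 < j ∧ m + 1 ≤ d j)) = ∅ := by
      rw [Finset.eq_empty_iff_forall_notMem]
      intro j hj
      simp only [Finset.mem_filter, Finset.mem_Icc] at hj
      obtain ⟨⟨h1j, hjn⟩, hij, hd⟩ := hj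
      have h1 : d j ≤ d (m + 1) := hmono (m + 1) j (by omega) (by omega) hjn
      have : m + 1 ≤ m := hmax (m + 1) (by omega) (by omega) (by omega)
      omega
    rw [hA, hB, Nat.card_Icc]
    simp
  · intro i hi hid
    have fact : ∀ j, i - 1 ≤ j → j ≤ n → d j < i - 1 := by
      intro j hij hjn
      by_contra h
      push_neg at h
      have h2 : d j ≤ d (i - 1) := hmono (i - 1) j (by omega) hij hjn
      have : i - 1 ≤ m := hmax (i - 1) (by omega) (by omega) (by omega)
      omega
    unfold corrConj conj
    have hB : ((Finset.Icc 1 n).filter (fun j => i < j ∧ i ≤ d j)) = ∅ := by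
      rw [Finset.eq_empty_iff_forall_notMem]
      intro j hj
      simp only [Finset.mem_filter, Finset.mem_Icc] at hj
      obtain ⟨⟨h1j, hjn⟩, hij, hd⟩ := hj
      have := fact j (by omega) hjn
      omega
    have hA : ((Finset.Icc 1 n).filter (fun j => j < i ∧ i - 1 ≤ d j))
        = ((Finset.Icc 1 n).filter (fun j => i - 1 ≤ d j)) := by
      ext j
      simp only [Finset.mem_filter, Finset.mem_Icc]
      constructor
      · rintro ⟨hj, _, hd⟩; exact ⟨hj, hd⟩
      · rintro ⟨⟨h1j, hjn⟩, hd⟩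
        refine ⟨⟨h1j, hjn⟩, ?_, hd⟩
        by_contra h
        push_neg at h
        have := fact j (by omega) hjn
        omega
    rw [hA, hB]
    simp
end

section
/- Let D = (d_1, ..., d_n) be a nonincreasing sequence of positive integers with d_1 < n. For any j with 2 ≤ j ≤ n: D is graphic if and only if the sequence obtained from D by subtracting 1 from d_1 and from the entry d_{tilde{d}_1} (where tilde{d}_1 = d_1 + 1), reordered and with zeros removed, is graphic, provided d_j = d_{tilde{d}_1}. -/
/-!
A realization of `D` may be taken on the vertex set `Fin n`, vertex `i` having degree
`d (i + 1)`; let `b` be the vertex of index `d 1` and `w` that of index `j - 1`, so that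
`d_j = deg b = deg w`. Removing the edge `0w` from a realization of `D` in which it is present
gives a realization of the reduced sequence in which it is absent, and adding it back reverses
this, so it suffices to move between realizations by degree-preserving 2-switches (replace
edges `ac`, `bu` by `ab`, `cu`; possible as soon as `deg c < deg b`, `a ~ c`, `a ≁ b`).

Forward: vertex `0` has `d 1` neighbours but only `d 1 - 1` vertices lie strictly between `0`
and `b`, so some neighbour `c` has degree at most `deg b`. Either `deg c = deg b`, or a switch
makes `0` adjacent to `b`; swapping the labels of two vertices of degree `d_j` then makes `0`
adjacent to `w`.
Backward: in a realization of the reduced sequence, vertex `0` has `d 1 - 1` neighbours, so it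
misses some `x` with `0 < x ≤ b`; then `deg x ≥ d_j > deg w`, and a switch removes the edge `0w`.
-/

/-- A finite sequence of natural numbers (possibly containing zeros) is graphic if
it is, up to permutation, the degree sequence of a simple graph on `l.length` vertices.
(Zero entries correspond to isolated vertices, so this also captures graphicness
after removal of zeros.) -/
def IsGraphic (l : List ℕ) : Prop :=
  ∃ G : SimpleGraph (Fin l.length),
    List.Perm (List.ofFn fun v => Nat.card (G.neighborSet v)) l

theorem exists_perm_comp_eq_of_perm_ofFn {α : Type*} [LinearOrder α] {n : ℕ} {f g : Fin n → α}
    (h : (List.ofFn g).Perm (List.ofFn f)) : ∃ σ : Equiv.Perm (Fin n), g ∘ σ = f := by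
  have hsort : g ∘ Tuple.sort g = f ∘ Tuple.sort f :=
    List.ofFn_injective <|
      (((Tuple.sort g).ofFn_comp_perm g).trans
          (h.trans ((Tuple.sort f).ofFn_comp_perm f).symm)).eq_of_pairwise'
        (Tuple.monotone_sort g).sortedLE_ofFn.pairwise
        (Tuple.monotone_sort f).sortedLE_ofFn.pairwise
  refine ⟨Tuple.sort g * (Tuple.sort f)⁻¹, ?_⟩
  rw [Equiv.Perm.coe_mul, ← Function.comp_assoc, hsort, Function.comp_assoc,
    ← Equiv.Perm.coe_mul, mul_inv_cancel, Equiv.Perm.coe_one, Function.comp_id]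

namespace SimpleGraph

section

variable {V W : Type*}

/-- The degree, without a `Fintype` instance on the neighbour set; it is definitionally the
`Nat.card (G.neighborSet v)` of `IsGraphic`. -/
noncomputable def deg (G : SimpleGraph V) (v : V) : ℕ := (G.neighborSet v).ncard

lemma deg_comap (e : V ≃ W) (G : SimpleGraph W) : (G.comap e).deg = G.deg ∘ e := by
  funext v
  exact Set.ncard_preimage_of_injective_subset_range e.injective
    fun w _ => ⟨e.symm w, e.apply_symm_apply w⟩

variable {G : SimpleGraph V} {a b c w : V}

lemma exists_deg_eq_adj_of_adj_of_deg_eq [DecidableEq V] (hab : G.Adj a b)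
    (hbw : G.deg b = G.deg w) (hwa : w ≠ a) :
    ∃ G' : SimpleGraph V, G'.deg = G.deg ∧ G'.Adj a w := by
  refine ⟨G.comap (Equiv.swap b w), ?_, ?_⟩
  · rw [deg_comap]
    funext x
    rcases eq_or_ne x b with rfl | hxb
    · simp [hbw]
    rcases eq_or_ne x w with rfl | hxw
    · simp [hbw]
    · simp [Equiv.swap_apply_of_ne_of_ne hxb hxw]
  · simpa [Equiv.swap_apply_of_ne_of_ne hab.ne hwa.symm] using hab

lemma deg_sup_edge_of_ne (x : V) (hxa : x ≠ a) (hxb : x ≠ b) :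
    (G ⊔ edge a b).deg x = G.deg x := by
  have : (G ⊔ edge a b).neighborSet x = G.neighborSet x := by
    ext y
    simp [edge_adj, hxa, hxb]
  rw [deg, this, deg]

variable [Finite V]

lemma deg_sup_edge_left (hab : a ≠ b) (h : ¬G.Adj a b) :
    (G ⊔ edge a b).deg a = G.deg a + 1 := by
  have : (G ⊔ edge a b).neighborSet a = insert b (G.neighborSet a) := by
    ext x
    simp only [neighborSet_sup, Set.mem_union, mem_neighborSet, edge_adj, Set.mem_insert_iff]
    grind
  rw [deg, this, Set.ncard_insert_of_notMem (s := G.neighborSet a) h]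
  rfl

variable [DecidableEq V]

lemma deg_sup_edge (hab : a ≠ b) (h : ¬G.Adj a b) :
    (G ⊔ edge a b).deg = G.deg + Pi.single a 1 + Pi.single b 1 := by
  funext x
  simp only [Pi.add_apply, Pi.single_apply]
  rcases eq_or_ne x a with rfl | hxa
  · simp [deg_sup_edge_left hab h, hab]
  rcases eq_or_ne x b with rfl | hxb
  · rw [edge_comm, deg_sup_edge_left hxa (fun h' => h h'.symm)]
    simp [hxa]
  · simp [deg_sup_edge_of_ne x hxa hxb, hxa, hxb]

lemma deg_eq_deg_sdiff_edge (h : G.Adj a b) :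
    G.deg = (G \ edge a b).deg + Pi.single a 1 + Pi.single b 1 := by
  conv_lhs => rw [← sdiff_sup_cancel ((edge_le_iff G).2 (Or.inr h))]
  exact deg_sup_edge h.ne (by simp [edge_adj, h.ne])

lemma exists_deg_eq_adj_iff {f : V → ℕ} (haw : a ≠ w) :
    (∃ G : SimpleGraph V, G.deg = f ∧ G.Adj a w) ↔
      ∃ G : SimpleGraph V, G.deg + Pi.single a 1 + Pi.single w 1 = f ∧ ¬G.Adj a w :=
  ⟨fun ⟨G, hG, h⟩ =>
    ⟨G \ edge a w, (deg_eq_deg_sdiff_edge h).symm.trans hG, by simp [edge_adj, haw]⟩,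
    fun ⟨G, hG, h⟩ => ⟨G ⊔ edge a w, (deg_sup_edge haw h).trans hG, by simp [edge_adj, haw]⟩⟩

lemma exists_deg_eq_adj_not_adj_of_deg_lt (hac : G.Adj a c) (hab : ¬G.Adj a b) (hne : a ≠ b)
    (hlt : G.deg c < G.deg b) :
    ∃ G' : SimpleGraph V, G'.deg = G.deg ∧ G'.Adj a b ∧ ¬G'.Adj a c := by
  obtain ⟨u, hbu, hu⟩ : ∃ u ∈ G.neighborSet b, u ∉ insert c (G.neighborSet c \ {a}) := by
    refine Set.exists_mem_notMem_of_ncard_lt_ncard (lt_of_le_of_lt ?_ hlt)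
    calc _ ≤ (G.neighborSet c \ {a}).ncard + 1 := Set.ncard_insert_le _ _
      _ = G.deg c := Set.ncard_sdiff_singleton_add_one (s := G.neighborSet c) hac.symm
  have hbc : b ≠ c := fun h => hab (h ▸ hac)
  simp only [mem_neighborSet, Set.mem_insert_iff, Set.mem_sdiff, Set.mem_singleton_iff,
    not_or, not_and_not_right] at hbu hu
  obtain ⟨huc, hcu⟩ := hu
  have hua : u ≠ a := fun h => hab (h ▸ hbu.symm)
  set H := (G \ edge a c) \ edge b u
  have hG : G.deg = H.deg + Pi.single a 1 + Pi.single c 1 + Pi.single b 1 + Pi.single u 1 := by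
    rw [deg_eq_deg_sdiff_edge hac, deg_eq_deg_sdiff_edge (G := G \ edge a c) (a := b) (b := u)
      ⟨hbu, by simp [edge_adj, hne.symm, hbc]⟩]
    abel
  have hHab : ¬H.Adj a b := fun h => hab h.1.1
  have hHcu : ¬(H ⊔ edge a b).Adj c u := by
    rintro (⟨⟨hcu', -⟩, -⟩ | hedge)
    · exact hua (hcu hcu')
    · rw [edge_adj] at hedge
      grind [hac.ne]
  refine ⟨H ⊔ edge a b ⊔ edge c u, ?_, by simp [edge_adj, hne], ?_⟩
  · rw [deg_sup_edge (Ne.symm huc) hHcu, deg_sup_edge hne hHab, hG]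
    abel
  · simp [H, edge_adj, hac.ne, hbc.symm, hua.symm, hne]

end

section

variable {n : ℕ} [NeZero n] {G : SimpleGraph (Fin n)} {f : Fin n → ℕ} {b w : Fin n}

lemma exists_adj_zero_le (hb : (b : ℕ) ≤ G.deg 0) (h0 : 0 < G.deg 0) :
    ∃ c, G.Adj 0 c ∧ b ≤ c := by
  have hIoo : (Set.Ioo 0 b).ncard < G.deg 0 := by
    rw [← Finset.coe_Ioo, Set.ncard_coe_finset, Fin.card_Ioo]
    omega
  obtain ⟨c, hc, hcb⟩ := Set.exists_mem_notMem_of_ncard_lt_ncard hIoo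
  exact ⟨c, hc, not_lt.1 fun hcb' => hcb ⟨lt_of_le_of_ne (Fin.zero_le c) hc.ne, hcb'⟩⟩

lemma exists_not_adj_zero (hb : G.deg 0 < b) : ∃ x, 0 < x ∧ x ≤ b ∧ ¬G.Adj 0 x := by
  have hIoc : G.deg 0 < (Set.Ioc 0 b).ncard := by
    rw [← Finset.coe_Ioc, Set.ncard_coe_finset, Fin.card_Ioc]
    simpa using hb
  obtain ⟨x, ⟨hx0, hxb⟩, hx⟩ := Set.exists_mem_notMem_of_ncard_lt_ncard hIoc
  exact ⟨x, hx0, hxb, hx⟩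

lemma exists_deg_eq_adj_zero (hf : Antitone f) (hf0 : 0 < f 0) (hb : (b : ℕ) = f 0)
    (hw : f w = f b) (hw0 : w ≠ 0) (hG : G.deg = f) :
    ∃ G' : SimpleGraph (Fin n), G'.deg = f ∧ G'.Adj 0 w := by
  obtain ⟨c, h0c, hbc⟩ :=
    exists_adj_zero_le (G := G) (b := b) (by rw [hG]; omega) (by rw [hG]; omega)
  obtain ⟨G₁, hG₁, b', h0b', hb'⟩ : ∃ G₁ : SimpleGraph (Fin n), G₁.deg = f ∧
      ∃ b', G₁.Adj 0 b' ∧ f b' = f b := by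
    rcases (hf hbc).eq_or_lt with hcb | hcb
    · exact ⟨G, hG, c, h0c, hcb⟩
    by_cases h0b : G.Adj 0 b
    · exact ⟨G, hG, b, h0b, rfl⟩
    have hb0 : (0 : Fin n) ≠ b := fun h => by simp [← h] at hb; omega
    obtain ⟨G₁, hG₁, h0b', -⟩ :=
      exists_deg_eq_adj_not_adj_of_deg_lt h0c h0b hb0 (by rwa [hG])
    exact ⟨G₁, hG₁.trans hG, b, h0b', rfl⟩
  obtain ⟨G', hG', h0w⟩ :=
    exists_deg_eq_adj_of_adj_of_deg_eq h0b' (by rw [hG₁, hb', hw]) hw0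
  exact ⟨G', hG'.trans hG₁, h0w⟩

lemma exists_deg_add_eq_not_adj_zero (hf : Antitone f) (hb : (b : ℕ) = f 0) (hw : f w = f b)
    (hw0 : w ≠ 0) (hG : G.deg + Pi.single 0 1 + Pi.single w 1 = f) :
    ∃ G' : SimpleGraph (Fin n), G'.deg + Pi.single 0 1 + Pi.single w 1 = f ∧ ¬G'.Adj 0 w := by
  by_cases h0w : G.Adj 0 w
  swap
  · exact ⟨G, hG, h0w⟩
  have hdeg (x : Fin n) :
      G.deg x + (if x = 0 then 1 else 0) + (if x = w then 1 else 0) = f x := by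
    simpa [Pi.single_apply] using congrFun hG x
  obtain ⟨x, hx0, hxb, h0x⟩ := exists_not_adj_zero (G := G) (b := b) (by
    have := hdeg 0
    simp only [↓reduceIte, hw0.symm, add_zero] at this
    omega)
  have hxw : x ≠ w := fun h => h0x (h ▸ h0w)
  have hwx : G.deg w < G.deg x := by
    have hdw := hdeg w
    have hdx := hdeg x
    have := hf hxb
    simp only [hw0, ↓reduceIte, add_zero, hx0.ne', hxw] at hdw hdx
    omega
  obtain ⟨G', hG', -, h0w'⟩ := exists_deg_eq_adj_not_adj_of_deg_lt h0w h0x hx0.ne hwx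
  exact ⟨G', hG' ▸ hG, h0w'⟩

theorem exists_deg_eq_iff_exists_deg_add_eq (hf : Antitone f) (hf0 : 0 < f 0)
    (hb : (b : ℕ) = f 0) (hw : f w = f b) (hw0 : w ≠ 0) :
    (∃ G : SimpleGraph (Fin n), G.deg = f) ↔
      ∃ G : SimpleGraph (Fin n), G.deg + Pi.single 0 1 + Pi.single w 1 = f := by
  constructor
  · rintro ⟨G, hG⟩
    obtain ⟨G', hG', -⟩ :=
      (exists_deg_eq_adj_iff hw0.symm).1 (exists_deg_eq_adj_zero hf hf0 hb hw hw0 hG)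
    exact ⟨G', hG'⟩
  · rintro ⟨G, hG⟩
    obtain ⟨G', hG', -⟩ :=
      (exists_deg_eq_adj_iff hw0.symm).2 (exists_deg_add_eq_not_adj_zero hf hb hw hw0 hG)
    exact ⟨G', hG'⟩

end

end SimpleGraph

theorem isGraphic_ofFn_iff {n : ℕ} (f : Fin n → ℕ) :
    IsGraphic (List.ofFn f) ↔ ∃ G : SimpleGraph (Fin n), G.deg = f := by
  have hlen : (List.ofFn f).length = n := List.length_ofFn
  constructor
  · rintro ⟨G, hG⟩
    have : (List.ofFn (G.comap (finCongr hlen.symm)).deg).Perm (List.ofFn f) := by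
      rwa [SimpleGraph.deg_comap, List.ofFn_congr hlen.symm]
    obtain ⟨σ, hσ⟩ := exists_perm_comp_eq_of_perm_ofFn this
    exact ⟨_, (SimpleGraph.deg_comap σ _).trans hσ⟩
  · rintro ⟨G, rfl⟩
    refine ⟨G.comap (finCongr hlen), ?_⟩
    change (List.ofFn (G.comap (finCongr hlen)).deg).Perm _
    rw [SimpleGraph.deg_comap, List.ofFn_congr hlen]
    exact List.Perm.refl _

lemma add_single_add_single_eq_iff {V : Type*} [DecidableEq V] {a w : V} {f g : V → ℕ}
    (haw : a ≠ w) (ha : 0 < f a) (hw : 0 < f w) :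
    g + Pi.single a 1 + Pi.single w 1 = f ↔
      g = fun x => if x = a ∨ x = w then f x - 1 else f x := by
  simp only [funext_iff, Pi.add_apply, Pi.single_apply]
  refine forall_congr' fun x => ?_
  rcases eq_or_ne x a with rfl | hxa
  · simp only [↓reduceIte, haw, add_zero, or_false]
    omega
  rcases eq_or_ne x w with rfl | hxw
  · simp only [hxa, ↓reduceIte, add_zero, or_true]
    omega
  · simp [hxa, hxw]

theorem stmt_3_general (n : ℕ) (d : ℕ → ℕ)
    (hpos : ∀ i, 1 ≤ i → i ≤ n → 1 ≤ d i)
    (hmono : ∀ i j, 1 ≤ i → i ≤ j → j ≤ n → d j ≤ d i)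
    (h1 : d 1 < n)
    (j : ℕ) (hj2 : 2 ≤ j) (hjn : j ≤ n)
    (hval : d j = d (d 1 + 1)) :
    IsGraphic (List.ofFn fun i : Fin n => d (i.1 + 1)) ↔
      IsGraphic (List.ofFn fun i : Fin n =>
        if i.1 + 1 = 1 ∨ i.1 + 1 = j then d (i.1 + 1) - 1 else d (i.1 + 1)) := by
  have : NeZero n := ⟨by omega⟩
  let f : Fin n → ℕ := fun i => d (i.1 + 1)
  let b : Fin n := ⟨d 1, h1⟩
  let w : Fin n := ⟨j - 1, by omega⟩
  have hf : Antitone f := fun x y hxy => hmono _ _ (by omega) (by simpa using hxy) (by omega)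
  have hw0 : w ≠ 0 := Fin.ne_of_val_ne (by simp only [w, Fin.val_zero]; omega)
  have hwb : f w = f b := by simp only [f, w, b]; rw [Nat.sub_add_cancel (by omega), hval]
  have hw : 0 < f w := by
    simp only [f, w]
    rw [Nat.sub_add_cancel (by omega)]
    exact hpos j (by omega) hjn
  have hf0 : 0 < f 0 := lt_of_lt_of_le hw (hf (Fin.zero_le w))
  have hcond (i : Fin n) : (i.1 + 1 = 1 ∨ i.1 + 1 = j) ↔ (i = 0 ∨ i = w) := by
    simp only [Fin.ext_iff, Fin.val_zero, w]
    omega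
  simp_rw [hcond, isGraphic_ofFn_iff]
  change (∃ G : SimpleGraph (Fin n), G.deg = f) ↔
    ∃ G : SimpleGraph (Fin n), G.deg = fun x => if x = 0 ∨ x = w then f x - 1 else f x
  simp_rw [← add_single_add_single_eq_iff hw0.symm hf0 hw]
  exact SimpleGraph.exists_deg_eq_iff_exists_deg_add_eq hf hf0 (by simp [b, f]) hwb hw0

/-- Case (1) of the 2-Reduction Lemma, specialized to `i = 1` (so that
`tilde d_1 = d_1 + 1`): if `2 ≤ j ≤ n` and `d j = d (d 1 + 1)`, then `D` is graphic
iff the sequence obtained by subtracting `1` from `d 1` and from `d j` is graphic. -/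
theorem stmt_3 (n : ℕ) (d : ℕ → ℕ) (hn : 1 ≤ n)
    (hpos : ∀ i, 1 ≤ i → i ≤ n → 1 ≤ d i)
    (hmono : ∀ i j, 1 ≤ i → i ≤ j → j ≤ n → d j ≤ d i)
    (h1 : d 1 < n)
    (j : ℕ) (hj2 : 2 ≤ j) (hjn : j ≤ n)
    (hval : d j = d (d 1 + 1)) :
    IsGraphic (List.ofFn fun i : Fin n => d (i.1 + 1)) ↔
      IsGraphic (List.ofFn fun i : Fin n =>
        if i.1 + 1 = 1 ∨ i.1 + 1 = j then d (i.1 + 1) - 1 else d (i.1 + 1)) :=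
  stmt_3_general n d hpos hmono h1 j hj2 hjn hval
end

section
/- Let D = (d_1, ..., d_n) be a graphic nonincreasing sequence of positive integers with d_1 < n. Then for each j with 2 ≤ j ≤ n there exists a simple graph G on vertex set {1, ..., n} realizing D (vertex i has degree d_i) that contains the edge (1, j). -/
/-!
Realize `D` by any graph and let `u` be vertex 1, which has maximum degree since `D` is
nonincreasing, and `v` vertex `j`. If `u` and `v` are not adjacent, pick a neighbour `m` of `v`.
Were every neighbour of `u` other than `m` adjacent to `m`, then `m` would see all of them, `u` in
place of `m` itself, and also `v`, so `deg m > deg u`. Hence some neighbour `k` of `u` is not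
adjacent to `m`, and the 2-switch replacing the edges `uk, vm` by `uv, km` preserves all degrees.
-/

theorem List.exists_equiv_of_perm_ofFn {α : Type*} [LinearOrder α] {m n : ℕ}
    {f : Fin m → α} {g : Fin n → α} (h : (List.ofFn f).Perm (List.ofFn g)) :
    ∃ σ : Fin n ≃ Fin m, ∀ i, f (σ i) = g i := by
  obtain rfl : m = n := by simpa using h.length_eq
  have hsorted : (List.ofFn (f ∘ Tuple.sort f)).Perm (List.ofFn (g ∘ Tuple.sort g)) :=
    ((Tuple.sort f).ofFn_comp_perm f).trans (h.trans ((Tuple.sort g).ofFn_comp_perm g).symm)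
  have hpairwise (φ : Fin m → α) : (List.ofFn (φ ∘ Tuple.sort φ)).Pairwise (· ≤ ·) := by
    rw [← List.sortedLE_iff_pairwise, List.sortedLE_ofFn_iff]
    exact Tuple.monotone_sort φ
  have heq : f ∘ Tuple.sort f = g ∘ Tuple.sort g :=
    List.ofFn_injective (hsorted.eq_of_pairwise' (hpairwise f) (hpairwise g))
  refine ⟨(Tuple.sort g).symm.trans (Tuple.sort f), fun i => ?_⟩
  simpa using congrFun heq ((Tuple.sort g).symm i)

namespace SimpleGraph

variable {V : Type*} (G : SimpleGraph V)

def twoSwitch (u v k m : V) : SimpleGraph V :=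
  fromEdgeSet (G.edgeSet \ {s(u, k), s(v, m)} ∪ {s(u, v), s(k, m)})

variable {G} {u v k m : V}

theorem twoSwitch_comm : G.twoSwitch v u m k = G.twoSwitch u v k m := by
  rw [twoSwitch, twoSwitch, Set.pair_comm s(v, m), Sym2.eq_swap (a := v) (b := u),
    Sym2.eq_swap (a := m) (b := k)]

theorem twoSwitch_swap : G.twoSwitch k m u v = G.twoSwitch u v k m := by
  rw [twoSwitch, twoSwitch, Sym2.eq_swap (a := k) (b := u),
    Sym2.eq_swap (a := m) (b := v), Set.pair_comm s(k, m)]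

theorem twoSwitch_adj_of_ne (h : u ≠ v) : (G.twoSwitch u v k m).Adj u v := by
  simp [twoSwitch, h]

theorem neighborSet_twoSwitch_left (huk : G.Adj u k) (huv : u ≠ v) (hum : u ≠ m) :
    (G.twoSwitch u v k m).neighborSet u = insert v (G.neighborSet u \ {k}) := by
  have hku : k ≠ u := (G.ne_of_adj huk).symm
  ext x
  simp only [twoSwitch, mem_neighborSet, fromEdgeSet_adj, Set.mem_union, Set.mem_sdiff,
    mem_edgeSet, Set.mem_insert_iff, Set.mem_singleton_iff, Sym2.eq_iff]
  aesop

theorem neighborSet_twoSwitch_of_ne {w : V} (hwu : w ≠ u) (hwv : w ≠ v) (hwk : w ≠ k)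
    (hwm : w ≠ m) : (G.twoSwitch u v k m).neighborSet w = G.neighborSet w := by
  ext x
  simp only [twoSwitch, mem_neighborSet, fromEdgeSet_adj, Set.mem_union, Set.mem_sdiff,
    mem_edgeSet, Set.mem_insert_iff, Set.mem_singleton_iff, Sym2.eq_iff]
  have := G.ne_of_adj (a := w) (b := x)
  aesop

variable [Finite V]

theorem ncard_neighborSet_twoSwitch_left (huk : G.Adj u k) (huv : ¬G.Adj u v) (hne : u ≠ v)
    (hum : u ≠ m) :
    ((G.twoSwitch u v k m).neighborSet u).ncard = (G.neighborSet u).ncard := by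
  rw [neighborSet_twoSwitch_left huk hne hum, Set.ncard_insert_of_notMem (by simp [huv]),
    Set.ncard_sdiff_singleton_add_one (show k ∈ G.neighborSet u from huk)]

theorem ncard_neighborSet_twoSwitch (huk : G.Adj u k) (hvm : G.Adj v m) (huv : ¬G.Adj u v)
    (hkm : ¬G.Adj k m) (hne : u ≠ v) (hne' : k ≠ m) (w : V) :
    ((G.twoSwitch u v k m).neighborSet w).ncard = (G.neighborSet w).ncard := by
  have hum : u ≠ m := by rintro rfl; exact huv hvm.symm
  have hvk : v ≠ k := by rintro rfl; exact huv huk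
  by_cases hwu : w = u
  · subst hwu; exact ncard_neighborSet_twoSwitch_left huk huv hne hum
  by_cases hwv : w = v
  · subst hwv
    rw [← twoSwitch_comm]
    exact ncard_neighborSet_twoSwitch_left hvm (fun h => huv h.symm) hne.symm hvk
  by_cases hwk : w = k
  · subst hwk
    rw [← twoSwitch_swap]
    exact ncard_neighborSet_twoSwitch_left huk.symm hkm hne' hvk.symm
  by_cases hwm : w = m
  · subst hwm
    rw [← twoSwitch_swap, ← twoSwitch_comm]
    exact ncard_neighborSet_twoSwitch_left hvm.symm (fun h => hkm h.symm) hne'.symm hum.symm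
  rw [neighborSet_twoSwitch_of_ne hwu hwv hwk hwm]

theorem exists_adj_not_adj_of_ncard_neighborSet_le
    (hmax : (G.neighborSet m).ncard ≤ (G.neighborSet u).ncard) (hvm : G.Adj v m)
    (huv : ¬G.Adj u v) (hne : u ≠ v) : ∃ k, G.Adj u k ∧ k ≠ m ∧ ¬G.Adj k m := by
  classical
  by_contra! h
  have hmaps : Set.MapsTo (Equiv.swap u m) (G.neighborSet u) (G.neighborSet m) := by
    intro x hx
    by_cases hxm : x = m
    · subst hxm
      simpa using hx.symm
    · rw [Equiv.swap_apply_of_ne_of_ne (G.ne_of_adj hx).symm hxm]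
      exact (h x hx hxm).symm
  have hv : v ∉ Equiv.swap u m '' G.neighborSet u := by
    rintro ⟨x, hx, hxv⟩
    rw [Equiv.swap_apply_eq_iff, Equiv.swap_apply_of_ne_of_ne hne.symm (G.ne_of_adj hvm)] at hxv
    exact huv (hxv ▸ hx)
  have hlt : (G.neighborSet u).ncard + 1 ≤ (G.neighborSet m).ncard :=
    calc (G.neighborSet u).ncard + 1
        = (insert v (Equiv.swap u m '' G.neighborSet u)).ncard := by
          rw [Set.ncard_insert_of_notMem hv, Set.ncard_image_of_injective _ (Equiv.injective _)]
      _ ≤ (G.neighborSet m).ncard :=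
          Set.ncard_le_ncard (Set.insert_subset hvm.symm hmaps.image_subset)
  omega

theorem exists_ncard_neighborSet_eq_and_adj
    (hmax : ∀ w, (G.neighborSet w).ncard ≤ (G.neighborSet u).ncard) (hne : u ≠ v)
    (hv : (G.neighborSet v).Nonempty) :
    ∃ G' : SimpleGraph V, (∀ w, (G'.neighborSet w).ncard = (G.neighborSet w).ncard) ∧
      G'.Adj u v := by
  by_cases huv : G.Adj u v
  · exact ⟨G, fun _ => rfl, huv⟩
  obtain ⟨m, hvm⟩ := hv
  obtain ⟨k, huk, hkm, hk⟩ := exists_adj_not_adj_of_ncard_neighborSet_le (hmax m) hvm huv hne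
  exact ⟨_, ncard_neighborSet_twoSwitch huk hvm huv hk hne hkm, twoSwitch_adj_of_ne hne⟩

end SimpleGraph

/-- If `D` is graphic with `d 1 < n`, then for every `j ∈ [2..n]` there is a realization
of `D` on the vertex set `{1, …, n}` (vertex `i`, encoded as `⟨i-1, _⟩ : Fin n`, has
degree `d i`) containing the edge `(1, j)`. -/
theorem stmt_5 (n : ℕ) (d : ℕ → ℕ)
    (hpos : ∀ i, 1 ≤ i → i ≤ n → 1 ≤ d i)
    (hmono : ∀ i j, 1 ≤ i → i ≤ j → j ≤ n → d j ≤ d i)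
    (hD : IsGraphic (List.ofFn fun i : Fin n => d (i.1 + 1)))
    (j : ℕ) (hj2 : 2 ≤ j) (hjn : j ≤ n) :
    ∃ G : SimpleGraph (Fin n),
      (∀ v : Fin n, Nat.card (G.neighborSet v) = d (v.1 + 1)) ∧
        G.Adj ⟨0, by omega⟩ ⟨j - 1, by omega⟩ := by
  obtain ⟨G₀, hperm⟩ := hD
  obtain ⟨σ, hσ⟩ := List.exists_equiv_of_perm_ofFn hperm
  have hdeg (w : Fin n) : ((G₀.comap σ).neighborSet w).ncard = d (w.1 + 1) := by
    rw [← hσ w, ← Nat.card_coe_set_eq]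
    exact Nat.card_congr ((SimpleGraph.Iso.comap σ G₀).mapNeighborSet w)
  obtain ⟨G, hG, hadj⟩ := (G₀.comap σ).exists_ncard_neighborSet_eq_and_adj
    (u := ⟨0, by omega⟩) (v := ⟨j - 1, by omega⟩)
    (fun w => by simpa only [hdeg] using hmono 1 (w.1 + 1) le_rfl (by omega) (by omega))
    (by simp only [ne_eq, Fin.mk.injEq]; omega)
    (by rw [← Set.ncard_pos, hdeg]; exact hpos _ (by omega) (by omega))
  exact ⟨G, fun w => by rw [Nat.card_coe_set_eq, hG, hdeg], hadj⟩
end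

section
/- Let G be a simple graph, let v be a vertex of maximum degree, and let u be any other vertex not adjacent to v. If u has a neighbor w, then there exists a neighbor x of v with x ≠ u, x ≠ w, such that x is not adjacent to w; consequently the edge swap replacing edges (v,x) and (u,w) by (v,u) and (x,w) yields a simple graph with the same degree sequence containing the edge (v,u). -/
/-!
If every neighbour of `v` other than `w` were adjacent to `w`, then `N(v) \ {w} ⊆ N(w) \ {v}`,
and the inclusion is strict because `u` lies only on the right; hence `deg w > deg v`,
contradicting the maximality of `deg v`. The swap preserves all degrees because each of
`v, x, u, w` loses exactly one incident edge and gains exactly one.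
-/

open SimpleGraph Set

namespace SimpleGraph

variable {V : Type*}

theorem exists_adj_ne_not_adj_of_degree_le [Fintype V] [DecidableEq V] {G : SimpleGraph V}
    [DecidableRel G.Adj] {v w u : V} (hdeg : G.degree w ≤ G.degree v) (hwu : G.Adj w u)
    (hvu : ¬ G.Adj v u) (huv : u ≠ v) : ∃ x, G.Adj v x ∧ x ≠ w ∧ ¬ G.Adj x w := by
  by_contra! h
  have hsub : (G.neighborFinset v).erase w ⊂ (G.neighborFinset w).erase v := by
    refine Finset.ssubset_iff_of_subset (fun x hx => ?_) |>.mpr ⟨u, ?_, ?_⟩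
    · rw [Finset.mem_erase, mem_neighborFinset] at hx ⊢
      exact ⟨(G.ne_of_adj hx.2).symm, (h x hx.2 hx.1).symm⟩
    · simpa [huv] using hwu
    · simpa using fun _ => hvu
  have hlt := Finset.card_lt_card hsub
  simp only [Finset.card_erase_eq_ite, mem_neighborFinset, card_neighborFinset_eq_degree,
    G.adj_comm w v] at hlt
  split_ifs at hlt <;> omega

theorem ncard_setOf_mem_pair_of_disjoint [DecidableEq V] {a b c d : V} (hac : a ≠ c) (had : a ≠ d)
    (hbc : b ≠ c) (hbd : b ≠ d) (z : V) :
    {e ∈ ({s(a, b), s(c, d)} : Set (Sym2 V)) | z ∈ e}.ncard =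
      if z ∈ ({a, b, c, d} : Finset V) then 1 else 0 := by
  split_ifs with hz
  · rw [ncard_eq_one]
    simp only [Finset.mem_insert, Finset.mem_singleton] at hz
    rcases hz with rfl | rfl | rfl | rfl
    · exact ⟨s(z, b), by ext e; aesop⟩
    · exact ⟨s(a, z), by ext e; aesop⟩
    · exact ⟨s(z, d), by ext e; aesop⟩
    · exact ⟨s(c, z), by ext e; aesop⟩
  · rw [ncard_eq_zero]
    ext e
    simp only [Finset.mem_insert, Finset.mem_singleton] at hz
    aesop

theorem natCard_neighborSet_eq_of_edgeSet_eq_sdiff_union [Finite V] {G H : SimpleGraph V}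
    {A B : Set (Sym2 V)} (hA : A ⊆ G.edgeSet) (hB : Disjoint B G.edgeSet)
    (hH : H.edgeSet = G.edgeSet \ A ∪ B)
    (hAB : ∀ z, {e ∈ A | z ∈ e}.ncard = {e ∈ B | z ∈ e}.ncard) (z : V) :
    Nat.card (H.neighborSet z) = Nat.card (G.neighborSet z) := by
  have hinc : H.incidenceSet z = G.incidenceSet z \ {e ∈ A | z ∈ e} ∪ {e ∈ B | z ∈ e} := by
    ext e
    simp only [incidenceSet, hH, mem_union, mem_sdiff, mem_ofPred_eq]
    have := @hA e
    tauto
  have hdisj : Disjoint (G.incidenceSet z \ {e ∈ A | z ∈ e}) {e ∈ B | z ∈ e} :=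
    (hB.mono (sep_subset _ _) (sdiff_subset.trans (G.incidenceSet_subset z))).symm
  have hsub : {e ∈ A | z ∈ e} ⊆ G.incidenceSet z := fun e he => ⟨hA he.1, he.2⟩
  classical
  rw [← Nat.card_congr (H.incidenceSetEquivNeighborSet z),
    ← Nat.card_congr (G.incidenceSetEquivNeighborSet z), Nat.card_coe_set_eq,
    Nat.card_coe_set_eq, hinc, ncard_union_eq hdisj, ncard_sdiff hsub, ← hAB z]
  have := ncard_le_ncard hsub
  omega

end SimpleGraph

/-- Swap argument: if `v` has maximum degree, `u` is not adjacent to `v`, and `w` is a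
neighbor of `u`, then `v` has a neighbor `x ∉ {u, w}` not adjacent to `w`; replacing the
edges `(v,x)` and `(u,w)` by `(v,u)` and `(x,w)` yields a simple graph with the same
degree sequence which contains the edge `(v,u)`. -/
theorem stmt_6 {V : Type*} [Fintype V] [DecidableEq V]
    (G : SimpleGraph V) [DecidableRel G.Adj]
    (v u w : V)
    (hmax : ∀ z : V, G.degree z ≤ G.degree v)
    (huv : u ≠ v) (hnadj : ¬ G.Adj v u) (huw : G.Adj u w) :
    ∃ x : V, G.Adj v x ∧ x ≠ u ∧ x ≠ w ∧ ¬ G.Adj x w ∧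
      ∃ G' : SimpleGraph V,
        G'.Adj v u ∧
        (∀ z : V, Nat.card (G'.neighborSet z) = G.degree z) ∧
        G'.edgeSet = (G.edgeSet \ {s(v, x), s(u, w)}) ∪ {s(v, u), s(x, w)} := by
  obtain ⟨x, hvx, hxw, hnxw⟩ := exists_adj_ne_not_adj_of_degree_le (hmax w) huw.symm hnadj huv
  have hxu : x ≠ u := by rintro rfl; exact hnadj hvx
  have hvw : v ≠ w := by rintro rfl; exact hnadj huw.symm
  set E := (G.edgeSet \ {s(v, x), s(u, w)}) ∪ {s(v, u), s(x, w)}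
  have hE : (fromEdgeSet E).edgeSet = E := by
    refine (edgeSet_eq_iff _ _).2 ⟨rfl, Set.disjoint_left.mpr ?_⟩
    rintro e (⟨he, -⟩ | rfl | rfl)
    · exact G.not_isDiag_of_mem_edgeSet he
    · simpa using huv.symm
    · simpa using hxw
  have hcount : ∀ z, {e ∈ ({s(v, x), s(u, w)} : Set (Sym2 V)) | z ∈ e}.ncard =
      {e ∈ ({s(v, u), s(x, w)} : Set (Sym2 V)) | z ∈ e}.ncard := fun z => by
    rw [ncard_setOf_mem_pair_of_disjoint huv.symm hvw hxu hxw,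
      ncard_setOf_mem_pair_of_disjoint hvx.ne hvw hxu.symm huw.ne, Finset.insert_comm x u]
  refine ⟨x, hvx, hxu, hxw, hnxw, fromEdgeSet E, by simp [E, huv.symm], fun z => ?_, hE⟩
  rw [← card_neighborSet_eq_degree, ← Nat.card_eq_fintype_card]
  exact natCard_neighborSet_eq_of_edgeSet_eq_sdiff_union
    (by simp [insert_subset_iff, hvx, huw]) (by simp [Set.disjoint_left, hnadj, hnxw]) hE hcount z
end

section
/- Let D = (d_1, ..., d_n) be a nonincreasing sequence of positive integers with d_n < n - 1. Then m - 1 ≤ w ≤ m, where m = max{i : d_i ≥ i} is the maximum strong index and w = min{i : i ≥ d_{i+2}} is the minimum weak index. -/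
/-- `m - 1 ≤ w ≤ m` where `m` is the maximum strong index and `w` the minimum weak index
(an index `i ∈ [1..n-2]` is weak when `d (i+2) ≤ i`). -/
theorem stmt_9 (n : ℕ) (d : ℕ → ℕ) (hn : 1 ≤ n)
    (hpos : ∀ i, 1 ≤ i → i ≤ n → 1 ≤ d i)
    (hmono : ∀ i j, 1 ≤ i → i ≤ j → j ≤ n → d j ≤ d i)
    (hdn : d n < n - 1)
    (m : ℕ) (hm1 : 1 ≤ m) (hmn : m ≤ n) (hms : m ≤ d m)
    (hmax : ∀ i, 1 ≤ i → i ≤ n → i ≤ d i → i ≤ m)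
    (w : ℕ) (hw1 : 1 ≤ w) (hwn : w ≤ n - 2) (hww : d (w + 2) ≤ w)
    (hwmin : ∀ i, 1 ≤ i → i ≤ n - 2 → d (i + 2) ≤ i → w ≤ i) :
    m - 1 ≤ w ∧ w ≤ m := by
  have hn3 : 3 ≤ n := by omega
  constructor
  · by_contra h
    push_neg at h
    have h2 : w + 2 ≤ m := by omega
    have := hmono (w + 2) m (by omega) h2 hmn
    omega
  · rcases le_or_gt m (n - 2) with hc | hc
    · have h1 : d (m + 1) ≤ m := by
        by_contra h
        push_neg at h
        have := hmax (m + 1) (by omega) (by omega) (by omega)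
        omega
      have h2 := hmono (m + 1) (m + 2) (by omega) (by omega) (by omega)
      exact hwmin m hm1 hc (by omega)
    · omega
end

section
/- Let D = (d_1, ..., d_n) be a nonincreasing sequence of positive integers with d_n < n - 1, and let C = (c_1, ..., c_n) with c_i = n - 1 - d_{n+1-i} be its complementary sequence. Then w = n - m_C - 1, where w is the minimum weak index of D and m_C is the maximum strong index of C. -/
/-- `w = n - m_C - 1`, where `w` is the minimum weak index of `D` and `m_C` is the
maximum strong index of the complementary sequence `C`, `c_i = n - 1 - d_{n+1-i}`. -/
theorem stmt_10 (n : ℕ) (d : ℕ → ℕ) (hn : 1 ≤ n)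
    (hpos : ∀ i, 1 ≤ i → i ≤ n → 1 ≤ d i)
    (hmono : ∀ i j, 1 ≤ i → i ≤ j → j ≤ n → d j ≤ d i)
    (hdn : d n < n - 1)
    (c : ℕ → ℕ) (hc : ∀ i, 1 ≤ i → i ≤ n → c i = n - 1 - d (n + 1 - i))
    (w : ℕ) (hw1 : 1 ≤ w) (hwn : w ≤ n - 2) (hww : d (w + 2) ≤ w)
    (hwmin : ∀ i, 1 ≤ i → i ≤ n - 2 → d (i + 2) ≤ i → w ≤ i)
    (mC : ℕ) (hmC1 : 1 ≤ mC) (hmCn : mC ≤ n) (hmCs : mC ≤ c mC)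
    (hmCmax : ∀ i, 1 ≤ i → i ≤ n → i ≤ c i → i ≤ mC) :
    w = n - mC - 1 := by
  have hn3 : 3 ≤ n := by
    have h1 := hpos n hn le_rfl
    omega
  have hcmC := hc mC hmC1 hmCn
  set x := d (n + 1 - mC) with hx
  have hx1 : 1 ≤ x := hpos _ (by omega) (by omega)
  have hkey : mC + x ≤ n - 1 := by
    rw [hcmC] at hmCs; omega
  have hmC2 : mC ≤ n - 2 := by omega
  have h1 : w ≤ n - mC - 1 := by
    apply hwmin _ (by omega) (by omega)
    have h : n - mC - 1 + 2 = n + 1 - mC := by omega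
    rw [h]; omega
  have h2 : n - w - 1 ≤ mC := by
    apply hmCmax _ (by omega) (by omega)
    rw [hc _ (by omega) (by omega)]
    have h : n + 1 - (n - w - 1) = w + 2 := by omega
    rw [h]
    omega
  omega
end

section
/- Let D = (d_1, ..., d_n) be a nonincreasing sequence of positive integers with d_n < n - 1. Then w = m - 1 if and only if d*_m = m, where w is the minimum weak index, m the maximum strong index, and d* the conjugate. -/
/-- `w = m - 1` iff `d*_m = m`, where `w` is the minimum weak index and `m` the maximum
strong index. -/
theorem stmt_11 (n : ℕ) (d : ℕ → ℕ) (hn : 1 ≤ n)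
    (hpos : ∀ i, 1 ≤ i → i ≤ n → 1 ≤ d i)
    (hmono : ∀ i j, 1 ≤ i → i ≤ j → j ≤ n → d j ≤ d i)
    (hdn : d n < n - 1)
    (m : ℕ) (hm1 : 1 ≤ m) (hmn : m ≤ n) (hms : m ≤ d m)
    (hmax : ∀ i, 1 ≤ i → i ≤ n → i ≤ d i → i ≤ m)
    (w : ℕ) (hw1 : 1 ≤ w) (hwn : w ≤ n - 2) (hww : d (w + 2) ≤ w)
    (hwmin : ∀ i, 1 ≤ i → i ≤ n - 2 → d (i + 2) ≤ i → w ≤ i) :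
    w = m - 1 ↔ conj n d m = m := by
  have hn3 : 3 ≤ n := by have := hpos n hn le_rfl; omega
  have hmltn : m < n := by
    rcases lt_or_eq_of_le hmn with h | h
    · exact h
    · subst h; omega
  -- conj n d m = m ↔ d (m+1) < m
  have hconj_iff : conj n d m = m ↔ d (m + 1) < m := by
    constructor
    · intro hc
      by_contra h
      push_neg at h
      have hsub : Finset.Icc 1 (m + 1) ⊆
          (Finset.Icc 1 n).filter (fun j => m ≤ d j) := by
        intro j hj
        simp only [Finset.mem_Icc] at hj
        simp only [Finset.mem_filter, Finset.mem_Icc]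
        refine ⟨⟨hj.1, by omega⟩, ?_⟩
        exact le_trans h (hmono j (m + 1) hj.1 hj.2 (by omega))
      have := Finset.card_le_card hsub
      rw [Nat.card_Icc] at this
      unfold conj at hc
      omega
    · intro h
      have hset : (Finset.Icc 1 n).filter (fun j => m ≤ d j) = Finset.Icc 1 m := by
        ext j
        simp only [Finset.mem_filter, Finset.mem_Icc]
        constructor
        · rintro ⟨⟨h1, h2⟩, h3⟩
          refine ⟨h1, ?_⟩
          by_contra hj
          push_neg at hj
          have := hmono (m + 1) j (by omega) (by omega) h2
          omega
        · rintro ⟨h1, h2⟩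
          refine ⟨⟨h1, by omega⟩, ?_⟩
          exact le_trans hms (hmono j m h1 h2 hmn)
      unfold conj
      rw [hset, Nat.card_Icc]
      omega
  -- w ≥ m - 1
  have hwge : m - 1 ≤ w := by
    by_contra h
    push_neg at h
    have h2 : w + 2 ≤ m := by omega
    have := hmono (w + 2) m (by omega) h2 hmn
    omega
  rw [hconj_iff]
  constructor
  · intro hweq
    have hm2 : 2 ≤ m := by omega
    have : w + 2 = m + 1 := by omega
    rw [this] at hww
    omega
  · intro h
    have hm2 : 2 ≤ m := by
      by_contra hm
      have := hpos (m + 1) (by omega) (by omega)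
      omega
    have heq : (m - 1) + 2 = m + 1 := by omega
    have := hwmin (m - 1) (by omega) (by omega) (by rw [heq]; omega)
    omega
end

section
/- Let D = (d_1, ..., d_n) be a nonincreasing sequence of positive integers with d_n < n - 1, w the minimum weak index, and m the maximum strong index. Then d*_i ≤ m for all i with w + 1 ≤ i ≤ d_1. -/
/-- `d*_i ≤ m` for all `i ∈ [w+1..d_1]`, where `w` is the minimum weak index and `m`
the maximum strong index. -/
theorem stmt_12 (n : ℕ) (d : ℕ → ℕ) (hn : 1 ≤ n)
    (hpos : ∀ i, 1 ≤ i → i ≤ n → 1 ≤ d i)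
    (hmono : ∀ i j, 1 ≤ i → i ≤ j → j ≤ n → d j ≤ d i)
    (hdn : d n < n - 1)
    (m : ℕ) (hm1 : 1 ≤ m) (hmn : m ≤ n) (hms : m ≤ d m)
    (hmax : ∀ i, 1 ≤ i → i ≤ n → i ≤ d i → i ≤ m)
    (w : ℕ) (hw1 : 1 ≤ w) (hwn : w ≤ n - 2) (hww : d (w + 2) ≤ w)
    (hwmin : ∀ i, 1 ≤ i → i ≤ n - 2 → d (i + 2) ≤ i → w ≤ i) :
    ∀ i, w + 1 ≤ i → i ≤ d 1 → conj n d i ≤ m := by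
  intro i hi1 hi2
  have hn3 : 3 ≤ n := by omega
  simp only [conj]
  set S := (Finset.Icc 1 n).filter (fun j => i ≤ d j) with hS
  set c := S.card with hcdef
  rcases Nat.eq_zero_or_pos c with hc0 | hc1
  · omega
  have hcn : c ≤ n := by
    have h := Finset.card_filter_le (Finset.Icc 1 n) (fun j => i ≤ d j)
    simpa [Nat.card_Icc] using h
  have hdc : i ≤ d c := by
    by_contra h
    push_neg at h
    have hsub : S ⊆ Finset.Icc 1 (c - 1) := by
      intro j hj
      simp only [hS, Finset.mem_filter, Finset.mem_Icc] at hj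
      obtain ⟨⟨hj1, hjn⟩, hij⟩ := hj
      refine Finset.mem_Icc.mpr ⟨hj1, ?_⟩
      by_contra hjc
      push_neg at hjc
      have : d j ≤ d c := hmono c j hc1 (by omega) hjn
      omega
    have hle := Finset.card_le_card hsub
    simp only [Nat.card_Icc] at hle
    omega
  rcases le_or_gt c (w + 1) with h | h
  · exact hmax c hc1 hcn (by omega)
  · exfalso
    have h2 : d c ≤ d (w + 2) := hmono (w + 2) c (by omega) (by omega) hcn
    omega
end

section
/- Let D = (d_1, ..., d_n) be a nonincreasing sequence of positive integers with even sum. If the Berge inequalities sum_{i=1}^k d_i ≤ sum_{i=1}^k bar{d}_i hold for k = m and for every right strong index k (i.e., strong indices k with d_k > d_{k+1}), then D is graphic. -/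
/-!
Along a plateau `d k = d (k + 1)` of strong indices the corrected conjugate does not increase, so
the increments of `F k = ∑_{i ≤ k} (d i - bar d i)` do not decrease there. A first positive value of
`F` on `[1, m]` would therefore persist to the right end of its plateau, which is `m` or a right
strong index; hence the Berge inequalities hold for all `k ≤ m`. Double counting gives
`∑_{i ≤ k} bar d i ≤ k (k - 1) + ∑_{j > k} min (d j) k`, so the Erdős–Gallai inequalities hold for
`k ≤ m`, and beyond `m` they propagate from `k` to `k + 1` because `d (k + 1) ≤ k`.

The Erdős–Gallai theorem is proved as by Choudum, by induction on the degree sum: lowering `d` by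
one at the last positive index `s` and at the end `u` of the first plateau (or at `s - 1`) keeps
the Erdős–Gallai inequalities, and a realization of the lowered sequence becomes one of `d` by
adding the edge `us` or by a 2-switch.
-/

open Finset SimpleGraph

section Degrees

variable {V : Type*} {G : SimpleGraph V} {a b : V}

lemma deleteEdges_sup_edge {x y : V} (h : G.Adj x y) :
    G.deleteEdges {s(x, y)} ⊔ edge x y = G := by
  ext v w
  simp only [sup_adj, deleteEdges_adj, Set.mem_singleton_iff, edge_adj]
  grind [G.ne_of_adj, SimpleGraph.adj_symm]

variable [DecidableEq V]

lemma ncard_neighborSet_edge (hab : a ≠ b) (v : V) :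
    ((edge a b).neighborSet v).ncard = if v = a ∨ v = b then 1 else 0 := by
  rcases eq_or_ne v a with rfl | hva
  · have : (edge v b).neighborSet v = {b} := by
      ext
      simp only [mem_neighborSet, edge_adj, true_and, ne_eq, Set.mem_singleton_iff]
      grind
    simp [this]
  rcases eq_or_ne v b with rfl | hvb
  · have : (edge a v).neighborSet v = {a} := by
      ext
      simp only [mem_neighborSet, edge_adj, true_and, ne_eq, Set.mem_singleton_iff]
      grind
    simp [this]
  · have : (edge a b).neighborSet v = ∅ := by ext; simp [edge_adj, hva, hvb]
    simp [this, hva, hvb]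

variable [Finite V]

lemma ncard_neighborSet_sup_edge (hab : a ≠ b) (h : ¬G.Adj a b) (v : V) :
    ((G ⊔ edge a b).neighborSet v).ncard =
      (G.neighborSet v).ncard + if v = a ∨ v = b then 1 else 0 := by
  rw [neighborSet_sup, Set.ncard_union_eq ?_, ncard_neighborSet_edge hab]
  rw [Set.disjoint_left]
  rintro w hG hE
  simp only [mem_neighborSet, edge_adj] at hG hE
  rcases hE with ⟨⟨rfl, rfl⟩ | ⟨rfl, rfl⟩, -⟩
  · exact h hG
  · exact h hG.symm

lemma ncard_neighborSet_switch {x y : V} (hxy : G.Adj x y) (hax : ¬G.Adj a x)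
    (hby : ¬G.Adj b y) (hab : a ≠ b) (hxa : x ≠ a) (hxb : x ≠ b) (hya : y ≠ a) (hyb : y ≠ b)
    (v : V) :
    ((G.deleteEdges {s(x, y)} ⊔ edge a x ⊔ edge b y).neighborSet v).ncard =
      (G.neighborSet v).ncard + if v = a ∨ v = b then 1 else 0 := by
  set G₀ := G.deleteEdges {s(x, y)}
  have h₀ : G₀ ≤ G := deleteEdges_le _
  have hG := ncard_neighborSet_sup_edge (G.ne_of_adj hxy) (G := G₀) (by simp [G₀]) v
  rw [deleteEdges_sup_edge hxy] at hG
  have hax₀ : ¬G₀.Adj a x := fun h ↦ hax (h₀ h)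
  have hby₀ : ¬(G₀ ⊔ edge a x).Adj b y := by
    simp only [sup_adj, edge_adj, not_or]
    exact ⟨fun h ↦ hby (h₀ h), by grind⟩
  rw [ncard_neighborSet_sup_edge hyb.symm hby₀, ncard_neighborSet_sup_edge hxa.symm hax₀, hG]
  by_cases hva : v = a <;> by_cases hvb : v = b <;> by_cases hvx : v = x <;>
    by_cases hvy : v = y <;> simp_all

lemma exists_ncard_neighborSet_add_pair (hab : a ≠ b) (A : Finset V)
    (hA : (G.neighborSet a).ncard + 2 ≤ #A)
    (hbig : ∀ w ∈ A, w ≠ a → w ≠ b → (G.neighborSet b).ncard < (G.neighborSet w).ncard) :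
    ∃ H : SimpleGraph V, ∀ v,
      (H.neighborSet v).ncard = (G.neighborSet v).ncard + if v = a ∨ v = b then 1 else 0 := by
  by_cases hadj : G.Adj a b
  swap
  · exact ⟨G ⊔ edge a b, ncard_neighborSet_sup_edge hab hadj⟩
  obtain ⟨x, hxA, hxa, hax⟩ : ∃ x ∈ A, x ≠ a ∧ ¬G.Adj a x := by
    by_contra! hcon
    have hsub : (↑(A.erase a) : Set V) ⊆ G.neighborSet a := fun x hx ↦ by
      rw [coe_erase, Set.mem_sdiff, Set.mem_singleton_iff] at hx
      exact hcon x hx.1 hx.2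
    have := Set.ncard_le_ncard hsub
    have := pred_card_le_card_erase (s := A) (a := a)
    rw [Set.ncard_coe_finset] at *
    omega
  have hxb : x ≠ b := by rintro rfl; exact hax hadj
  obtain ⟨y, hxy, hyb, hby⟩ : ∃ y, G.Adj x y ∧ y ≠ b ∧ ¬G.Adj b y := by
    by_contra! hcon
    -- `a ∉ N(x)`, so `N(x) ⊆ {b} ∪ N(b) \ {a}` would make `x` no bigger than `b`.
    have hsub : G.neighborSet x ⊆ insert b (G.neighborSet b \ {a}) := fun y hy ↦ by
      rcases eq_or_ne y b with rfl | hyb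
      · exact Set.mem_insert _ _
      · refine Set.mem_insert_of_mem _ ⟨hcon y hy hyb, ?_⟩
        rintro rfl
        exact hax hy.symm
    have := Set.ncard_le_ncard hsub
    have := Set.ncard_insert_le b (G.neighborSet b \ {a})
    have := Set.ncard_sdiff_singleton_of_mem (s := G.neighborSet b) (a := a) hadj.symm
    have := hbig x hxA hxa hxb
    have : 0 < (G.neighborSet b).ncard := (Set.ncard_pos).mpr ⟨a, hadj.symm⟩
    omega
  have hya : y ≠ a := by rintro rfl; exact hax hxy.symm
  exact ⟨_, ncard_neighborSet_switch hxy hax hby hab hxa hxb hya hyb⟩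

end Degrees

lemma isGraphic_ofFn {n : ℕ} (f : Fin n → ℕ) (G : SimpleGraph (Fin n))
    (hG : ∀ v, (G.neighborSet v).ncard = f v) : IsGraphic (List.ofFn f) := by
  have key : ∀ l : List ℕ, l.length = n →
      (∃ G : SimpleGraph (Fin n), (List.ofFn fun v ↦ Nat.card (G.neighborSet v)).Perm l) →
        IsGraphic l := by
    rintro l rfl
    exact id
  refine key _ List.length_ofFn ⟨G, ?_⟩
  simp only [Nat.card_coe_set_eq, hG, List.Perm.refl]

lemma mul_sub_one_add_self (k : ℕ) : k * (k - 1) + k = k * k := by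
  rw [Nat.mul_sub_one, Nat.sub_add_cancel (Nat.le_mul_self k)]

lemma sum_Icc_add_sum_Icc (f : ℕ → ℕ) {a b c : ℕ} (hab : a ≤ b) (hbc : b ≤ c) :
    ∑ i ∈ Icc (a + 1) b, f i + ∑ i ∈ Icc (b + 1) c, f i = ∑ i ∈ Icc (a + 1) c, f i := by
  simp only [Icc_add_one_left_eq_Ioc]
  exact sum_Ioc_consecutive f hab hbc

lemma sum_Icc_one_eq_mul {d : ℕ → ℕ} {k c : ℕ} (h : ∀ i ∈ Icc 1 k, d i = c) :
    ∑ i ∈ Icc 1 k, d i = k * c := by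
  rw [sum_congr rfl h, sum_const, Nat.card_Icc, smul_eq_mul, Nat.add_sub_cancel]

lemma sum_eq_sum_add_ite_add_ite {f g : ℕ → ℕ} {u s p q : ℕ} (I : Finset ℕ)
    (h : ∀ j, g j = f j + (if j = u then p else 0) + if j = s then q else 0) :
    ∑ j ∈ I, g j = ∑ j ∈ I, f j + (if u ∈ I then p else 0) + if s ∈ I then q else 0 := by
  simp [h, sum_add_distrib, sum_ite_eq']

def ErdosGallaiIneq (n : ℕ) (d : ℕ → ℕ) (k : ℕ) : Prop :=
  ∑ i ∈ Icc 1 k, d i ≤ k * (k - 1) + ∑ j ∈ Icc (k + 1) n, min (d j) k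

section Plateau

variable {n k c s : ℕ} {d : ℕ → ℕ}

/-- The slack is even, and zero slack would give `k c ≥ k (k - 1) + c + 1`, impossible for
`c ≤ k`. -/
lemma add_two_le_of_erdosGallaiIneq (hd : AntitoneOn d (Set.Icc 1 n))
    (heven : Even (∑ i ∈ Icc 1 n, d i)) (hflat : ∀ i ∈ Icc 1 (k + 1), d i = c) (hck : c ≤ k)
    (hs : s ∈ Icc (k + 2) n) (hds : 1 ≤ d s) (hEG : ErdosGallaiIneq n d k) :
    ∑ i ∈ Icc 1 k, d i + 2 ≤ k * (k - 1) + ∑ j ∈ Icc (k + 1) n, min (d j) k := by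
  rw [mem_Icc] at hs
  have hc : d (k + 1) = c := hflat _ (by simp)
  have hmin : ∑ j ∈ Icc (k + 1) n, min (d j) k = ∑ j ∈ Icc (k + 1) n, d j := by
    refine sum_congr rfl fun j hj ↦ min_eq_left ?_
    rw [mem_Icc] at hj
    exact (hd ⟨by omega, by omega⟩ ⟨by omega, hj.2⟩ hj.1).trans (hc.trans_le hck)
  have hL : ∑ i ∈ Icc 1 k, d i = k * c :=
    sum_Icc_one_eq_mul fun i hi ↦ hflat i (by rw [mem_Icc] at hi ⊢; omega)
  have htail : c + d s ≤ ∑ j ∈ Icc (k + 1) n, d j := by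
    rw [← hc, ← sum_pair (f := d) (by omega : k + 1 ≠ s)]
    exact sum_le_sum_of_subset fun j ↦ by simp only [mem_insert, mem_singleton, mem_Icc]; omega
  have hsplit := sum_Icc_add_sum_Icc d (Nat.zero_le k) (by omega : k ≤ n)
  rw [zero_add, hL] at hsplit
  obtain ⟨r, hr⟩ := heven
  obtain ⟨q, hq⟩ := Nat.even_mul_pred_self k
  unfold ErdosGallaiIneq at hEG
  rw [hmin, hL] at hEG ⊢
  rcases k with _ | k
  · simp only [zero_add, zero_le, inf_of_le_right, sum_const_zero] at hmin htail
    omega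
  · have hkc : k * c ≤ k * (k + 1) := Nat.mul_le_mul_left k hck
    have : k * (k + 1) = k * k + k := by ring
    have : (k + 1) * c = k * c + c := by ring
    have : (k + 1) * k = k * k + k := by ring
    simp only [Nat.add_sub_cancel] at hq hEG ⊢
    omega

/-- Equality at `k` and the inequality at `k + 1` bound `c` by `k - 1 + C`, where `C` counts the
entries beyond `k` exceeding `k`; but those entries and the small positive `d s` make the tail at
`k` exceed `k C`. -/
lemma lt_of_erdosGallaiIneq_succ (hflat : ∀ i ∈ Icc 1 (k + 1), d i = c) (hkc : k < c)
    (hs : s ∈ Icc (k + 2) n) (hds : 1 ≤ d s) (hdsk : d s ≤ k)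
    (hEG : ErdosGallaiIneq n d (k + 1)) :
    ∑ i ∈ Icc 1 k, d i < k * (k - 1) + ∑ j ∈ Icc (k + 1) n, min (d j) k := by
  rw [mem_Icc] at hs
  set I := Icc (k + 1) n
  set C := #{j ∈ I | k < d j} with hC
  have hsucc : ∑ j ∈ I, min (d j) (k + 1) = ∑ j ∈ I, min (d j) k + C := by
    rw [hC, card_filter, ← sum_add_distrib]
    refine sum_congr rfl fun j _ ↦ ?_
    split_ifs <;> omega
  have hbig : k * C + 1 ≤ ∑ j ∈ I, min (d j) k := by
    calc k * C + 1 = ∑ j ∈ I, (k * (if k < d j then 1 else 0) + if j = s then 1 else 0) := by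
          rw [sum_add_distrib, ← mul_sum, hC, ← card_filter, sum_ite_eq',
            if_pos (mem_Icc.mpr ⟨by omega, hs.2⟩)]
      _ ≤ ∑ j ∈ I, min (d j) k := sum_le_sum fun j _ ↦ by split_ifs <;> grind
  have hhead : ∑ j ∈ I, min (d j) (k + 1) =
      (k + 1) + ∑ j ∈ Icc (k + 1 + 1) n, min (d j) (k + 1) := by
    rw [← sum_Icc_add_sum_Icc _ (by omega : k ≤ k + 1) (by omega : k + 1 ≤ n), Icc_self,
      sum_singleton, hflat _ (by simp), min_eq_right (by omega)]
  have hL : ∑ i ∈ Icc 1 k, d i = k * c :=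
    sum_Icc_one_eq_mul fun i hi ↦ hflat i (by rw [mem_Icc] at hi ⊢; omega)
  unfold ErdosGallaiIneq at hEG
  rw [sum_Icc_one_eq_mul hflat, Nat.add_sub_cancel] at hEG
  rw [hL]
  by_contra! hcon
  have e1 : (k + 1) * c = k * c + c := by ring
  have e2 : (k + 1) * k = k * k + k := by ring
  have e3 := mul_sub_one_add_self k
  have hcC : c + 1 ≤ k + C := by omega
  have := Nat.mul_le_mul_left k hcC
  rw [mul_add, mul_add, mul_one] at this
  omega

end Plateau

def decrAt (d : ℕ → ℕ) (u s : ℕ) (i : ℕ) : ℕ := if i = u ∨ i = s then d i - 1 else d i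

section decrAt

variable {d : ℕ → ℕ} {u s : ℕ}

lemma decrAt_apply_left : decrAt d u s u = d u - 1 := if_pos (Or.inl rfl)

lemma decrAt_apply_right : decrAt d u s s = d s - 1 := if_pos (Or.inr rfl)

lemma decrAt_apply_of_ne {i : ℕ} (hu : i ≠ u) (hs : i ≠ s) : decrAt d u s i = d i :=
  if_neg (by tauto)

variable (hus : u ≠ s) (hu : 1 ≤ d u) (hs : 1 ≤ d s)
include hus hu hs

lemma sum_decrAt (I : Finset ℕ) :
    ∑ j ∈ I, d j = ∑ j ∈ I, decrAt d u s j + (if u ∈ I then 1 else 0) + if s ∈ I then 1 else 0 :=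
  sum_eq_sum_add_ite_add_ite I fun j ↦ by unfold decrAt; split_ifs <;> subst_vars <;> omega

lemma sum_min_decrAt (I : Finset ℕ) (k : ℕ) :
    ∑ j ∈ I, min (d j) k = ∑ j ∈ I, min (decrAt d u s j) k +
      (if u ∈ I then if d u ≤ k then 1 else 0 else 0) +
      if s ∈ I then if d s ≤ k then 1 else 0 else 0 :=
  sum_eq_sum_add_ite_add_ite I fun j ↦ by unfold decrAt; split_ifs <;> subst_vars <;> omega

end decrAt

structure ReductionPair (n : ℕ) (d : ℕ → ℕ) (u s : ℕ) : Prop where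
  one_le_u : 1 ≤ u
  u_lt_s : u < s
  s_le_n : s ≤ n
  one_le_d_s : 1 ≤ d s
  d_u_lt_s : d u < s
  eq_d_u : ∀ i ∈ Icc 1 u, d i = d u
  lt_d_u : ∀ j ∈ Ioc u n, j ≠ s → d j < d u
  lt_d_s : ∀ j ∈ Ioc s n, d j < d s

namespace ReductionPair

variable {n : ℕ} {d : ℕ → ℕ} {u s : ℕ} (h : ReductionPair n d u s)
  (hd : AntitoneOn d (Set.Icc 1 n))
include h hd

lemma d_s_le_d_u : d s ≤ d u :=
  hd ⟨h.one_le_u, h.u_lt_s.le.trans h.s_le_n⟩ ⟨h.one_le_u.trans h.u_lt_s.le, h.s_le_n⟩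
    h.u_lt_s.le

lemma one_le_d_u : 1 ≤ d u := h.one_le_d_s.trans (h.d_s_le_d_u hd)

lemma antitoneOn_decrAt : AntitoneOn (decrAt d u s) (Set.Icc 1 n) := by
  intro i hi j hj hij
  have hdij := hd hi hj hij
  unfold decrAt
  by_cases hjus : j = u ∨ j = s
  · rw [if_pos hjus]
    split_ifs <;> omega
  rw [if_neg hjus]
  split_ifs with hius
  · rcases hius with rfl | rfl
    · have := h.lt_d_u j (mem_Ioc.mpr ⟨by omega, hj.2⟩) (by tauto)
      omega
    · have := h.lt_d_s j (mem_Ioc.mpr ⟨by omega, hj.2⟩)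
      omega
  · exact hdij

lemma sum_decrAt_add_two : ∑ i ∈ Icc 1 n, decrAt d u s i + 2 = ∑ i ∈ Icc 1 n, d i := by
  have hsum := sum_decrAt h.u_lt_s.ne (h.one_le_d_u hd) h.one_le_d_s (Icc 1 n)
  have := h.one_le_u
  have := h.u_lt_s
  have := h.s_le_n
  simp only [mem_Icc] at hsum
  split_ifs at hsum <;> omega

/-- Lowering `d` at `u` and `s` lowers the left side at `k` by `[u ≤ k] + [s ≤ k]` and the right
side by `[k < u ∧ d u ≤ k] + [k < s ∧ d s ≤ k]`; only for `k < u` and `d s ≤ k` does this need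
slack, which the two plateau lemmas provide. -/
lemma erdosGallaiIneq_decrAt (heven : Even (∑ i ∈ Icc 1 n, d i))
    (hEG : ∀ k ∈ Icc 1 n, ErdosGallaiIneq n d k) (k : ℕ) (hk : k ∈ Icc 1 n) :
    ErdosGallaiIneq n (decrAt d u s) k := by
  have hL := sum_decrAt h.u_lt_s.ne (h.one_le_d_u hd) h.one_le_d_s (Icc 1 k)
  have hR := sum_min_decrAt h.u_lt_s.ne (h.one_le_d_u hd) h.one_le_d_s (Icc (k + 1) n) k
  have hEGk := hEG k hk
  have hsu := h.d_s_le_d_u hd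
  have := h.one_le_u
  have := h.u_lt_s
  have := h.s_le_n
  rw [mem_Icc] at hk
  unfold ErdosGallaiIneq at hEGk ⊢
  simp only [mem_Icc] at hL hR
  rcases le_or_gt u k with huk | hku
  · split_ifs at hL hR <;> omega
  have hflat : ∀ i ∈ Icc 1 (k + 1), d i = d u := fun i hi ↦
    h.eq_d_u i (by rw [mem_Icc] at hi ⊢; omega)
  have hs : s ∈ Icc (k + 2) n := by rw [mem_Icc]; omega
  rcases lt_or_ge k (d s) with hks | hsk
  · split_ifs at hL hR <;> omega
  rcases le_or_gt (d u) k with hsmall | hlarge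
  · have := add_two_le_of_erdosGallaiIneq hd heven hflat hsmall hs h.one_le_d_s hEGk
    split_ifs at hL hR <;> omega
  · have := lt_of_erdosGallaiIneq_succ hflat hlarge hs h.one_le_d_s hsk
      (hEG (k + 1) (mem_Icc.mpr ⟨by omega, by omega⟩))
    split_ifs at hL hR <;> omega

lemma exists_graph_of_decrAt {G : SimpleGraph (Fin n)}
    (hG : ∀ v : Fin n, (G.neighborSet v).ncard = decrAt d u s (v.val + 1)) :
    ∃ H : SimpleGraph (Fin n), ∀ v : Fin n, (H.neighborSet v).ncard = d (v.val + 1) := by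
  have := h.one_le_u
  have := h.u_lt_s
  have hsn := h.s_le_n
  have hsu := h.d_s_le_d_u hd
  have hds := h.one_le_d_s
  obtain ⟨a, ha⟩ : ∃ a : Fin n, a.val + 1 = u := ⟨⟨u - 1, by omega⟩, Nat.sub_add_cancel (by omega)⟩
  obtain ⟨b, hb⟩ : ∃ b : Fin n, b.val + 1 = s := ⟨⟨s - 1, by omega⟩, Nat.sub_add_cancel (by omega)⟩
  have hva : ∀ v : Fin n, v = a ↔ v.val + 1 = u := fun v ↦ by rw [Fin.ext_iff]; omega
  have hvb : ∀ v : Fin n, v = b ↔ v.val + 1 = s := fun v ↦ by rw [Fin.ext_iff]; omega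
  have hab : a ≠ b := by rw [Ne, hvb, ha]; omega
  have hA : (G.neighborSet a).ncard + 2 ≤ #{v : Fin n | v.val < s} := by
    rw [Fin.card_filter_val_lt, hG, ha, decrAt_apply_left]
    have := h.d_u_lt_s
    omega
  obtain ⟨H, hH⟩ := exists_ncard_neighborSet_add_pair hab _ hA fun w hw hwa hwb ↦ by
    rw [Ne, hva] at hwa
    rw [Ne, hvb] at hwb
    simp only [mem_filter, mem_univ, true_and] at hw
    have := hd ⟨by omega, by omega⟩ ⟨by omega, hsn⟩ (by omega : w.val + 1 ≤ s)
    rw [hG, hG, hb, decrAt_apply_right, decrAt_apply_of_ne hwa hwb]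
    omega
  refine ⟨H, fun v ↦ ?_⟩
  rw [hH, hG]
  simp only [hva, hvb]
  by_cases hvu : v.val + 1 = u
  · rw [hvu, decrAt_apply_left, if_pos (Or.inl rfl)]
    omega
  by_cases hvs : v.val + 1 = s
  · rw [hvs, decrAt_apply_right, if_pos (Or.inr rfl)]
    omega
  · rw [decrAt_apply_of_ne hvu hvs, if_neg (by tauto), add_zero]

end ReductionPair

lemma eq_d_one_of_forall_not_lt {n u : ℕ} {d : ℕ → ℕ} (hd : AntitoneOn d (Set.Icc 1 n))
    (hun : u ≤ n) (hnot : ∀ i, 1 ≤ i → i < u → ¬d (i + 1) < d i) :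
    ∀ i ∈ Icc 1 u, d i = d 1 := by
  intro i hi
  rw [mem_Icc] at hi
  induction i, hi.1 using Nat.le_induction with
  | base => rfl
  | succ i hi1 ih =>
    have := hnot i hi1 (by omega)
    have := hd ⟨hi1, by omega⟩ ⟨by omega, by omega⟩ (by omega : i ≤ i + 1)
    have := ih ⟨hi1, by omega⟩
    omega

lemma lt_of_erdosGallaiIneq_one {n s : ℕ} {d : ℕ → ℕ} (hs : 1 ≤ s)
    (hzero : ∀ j ∈ Ioc s n, d j = 0) (hEG : ErdosGallaiIneq n d 1) : d 1 < s := by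
  have hcount : ∑ j ∈ Icc 2 n, min (d j) 1 ≤ #{j ∈ Icc 2 n | j ≤ s} := by
    rw [card_filter]
    refine sum_le_sum fun j hj ↦ ?_
    split_ifs with hjs
    · omega
    · rw [hzero j (mem_Ioc.mpr ⟨by omega, (mem_Icc.mp hj).2⟩), zero_min]
  have : #{j ∈ Icc 2 n | j ≤ s} ≤ #(Icc 2 s) :=
    card_le_card fun j ↦ by simp only [mem_filter, mem_Icc]; omega
  rw [Nat.card_Icc] at this
  unfold ErdosGallaiIneq at hEG
  simp only [Icc_self, sum_singleton, Nat.reduceAdd] at hEG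
  omega

lemma exists_reductionPair {n : ℕ} {d : ℕ → ℕ} (hd : AntitoneOn d (Set.Icc 1 n))
    (hEG : ∀ k ∈ Icc 1 n, ErdosGallaiIneq n d k) (hsum : ∑ i ∈ Icc 1 n, d i ≠ 0) :
    ∃ u s, ReductionPair n d u s := by
  obtain ⟨i, hi, hdi⟩ := exists_ne_zero_of_sum_ne_zero hsum
  rw [mem_Icc] at hi
  set s := Nat.findGreatest (fun j ↦ 1 ≤ d j) n
  have his : i ≤ s := Nat.le_findGreatest hi.2 (by omega)
  have hds : 1 ≤ d s := Nat.findGreatest_spec (P := fun j ↦ 1 ≤ d j) hi.2 (by omega)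
  have hsn : s ≤ n := Nat.findGreatest_le n
  have hzero : ∀ j ∈ Ioc s n, d j = 0 := fun j hj ↦ by
    rw [mem_Ioc] at hj
    have := Nat.findGreatest_is_greatest hj.1 hj.2
    omega
  have hd1s : d s ≤ d 1 := hd ⟨le_rfl, by omega⟩ ⟨by omega, hsn⟩ (by omega)
  have hd1 := lt_of_erdosGallaiIneq_one (by omega) hzero (hEG 1 (mem_Icc.mpr ⟨le_rfl, by omega⟩))
  have hex : ∃ i, 1 ≤ i ∧ (i + 1 = s ∨ d (i + 1) < d i) := ⟨s - 1, by omega, by omega⟩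
  set u := Nat.find hex
  obtain ⟨hu1, hu⟩ : 1 ≤ u ∧ (u + 1 = s ∨ d (u + 1) < d u) := Nat.find_spec hex
  have hus : u < s := by
    have := Nat.find_min' hex (⟨by omega, by omega⟩ : 1 ≤ s - 1 ∧ _)
    omega
  have hflat := eq_d_one_of_forall_not_lt (u := u) hd (by omega) fun i hi1 hiu hlt ↦
    Nat.find_min hex hiu ⟨hi1, Or.inr hlt⟩
  have hdu : d u = d 1 := hflat u (mem_Icc.mpr ⟨hu1, le_rfl⟩)
  refine ⟨u, s, hu1, hus, hsn, hds, by omega, fun i hi ↦ by rw [hflat i hi, hdu], ?_, ?_⟩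
  · intro j hj hjs
    rcases lt_or_gt_of_ne hjs with hjs | hjs
    · rw [mem_Ioc] at hj
      have := hd ⟨by omega, by omega⟩ ⟨by omega, hj.2⟩ (by omega : u + 1 ≤ j)
      omega
    · rw [hzero j (mem_Ioc.mpr ⟨hjs, (mem_Ioc.mp hj).2⟩)]
      omega
  · intro j hj
    rw [hzero j hj]
    omega

theorem exists_graph_of_erdosGallaiIneq {n : ℕ} {d : ℕ → ℕ} (hd : AntitoneOn d (Set.Icc 1 n))
    (heven : Even (∑ i ∈ Icc 1 n, d i)) (hEG : ∀ k ∈ Icc 1 n, ErdosGallaiIneq n d k) :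
    ∃ G : SimpleGraph (Fin n), ∀ v : Fin n, (G.neighborSet v).ncard = d (v.val + 1) := by
  induction hN : ∑ i ∈ Icc 1 n, d i using Nat.strong_induction_on generalizing d with
  | _ N ih =>
  rcases eq_or_ne N 0 with rfl | hN0
  · refine ⟨⊥, fun v ↦ ?_⟩
    rw [sum_eq_zero_iff.mp hN (v.val + 1) (mem_Icc.mpr ⟨by omega, v.isLt⟩)]
    simp
  obtain ⟨u, s, h⟩ := exists_reductionPair hd hEG (hN ▸ hN0)
  have hsum := h.sum_decrAt_add_two hd
  obtain ⟨G, hG⟩ := ih (N - 2) (by omega) (h.antitoneOn_decrAt hd)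
    (by rw [← hsum, Nat.even_add] at heven; exact heven.mpr even_two)
    (h.erdosGallaiIneq_decrAt hd heven hEG) (by omega)
  exact h.exists_graph_of_decrAt hd hG

def BergeIneq (n : ℕ) (d : ℕ → ℕ) (k : ℕ) : Prop :=
  ∑ i ∈ Icc 1 k, d i ≤ ∑ i ∈ Icc 1 k, corrConj n d i

lemma sum_corrConj_le {n k : ℕ} {d : ℕ → ℕ} (hkn : k ≤ n) :
    ∑ i ∈ Icc 1 k, corrConj n d i ≤ k * (k - 1) + ∑ j ∈ Icc (k + 1) n, min (d j) k := by
  set g : ℕ → ℕ := fun j ↦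
    ∑ i ∈ Icc 1 k, ((if j < i ∧ i - 1 ≤ d j then 1 else 0) + if i < j ∧ i ≤ d j then 1 else 0)
  have hswap : ∑ i ∈ Icc 1 k, corrConj n d i = ∑ j ∈ Icc 1 n, g j := by
    simp only [g, corrConj, card_filter, ← sum_add_distrib]
    exact sum_comm
  have hhead : ∀ j ∈ Icc 1 k, g j ≤ k - 1 := fun j hj ↦
    calc g j ≤ ∑ i ∈ Icc 1 k, if i ≠ j then 1 else 0 :=
          sum_le_sum fun i _ ↦ by split_ifs <;> omega
      _ = k - 1 := by
          rw [← card_filter, filter_ne', card_erase_of_mem hj, Nat.card_Icc, Nat.add_sub_cancel]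
  have htail : ∀ j ∈ Icc (k + 1) n, g j = min (d j) k := fun j hj ↦ by
    rw [mem_Icc] at hj
    calc g j = ∑ i ∈ Icc 1 k, if i ≤ d j then 1 else 0 :=
          sum_congr rfl fun i hi ↦ by rw [mem_Icc] at hi; split_ifs <;> omega
      _ = min (d j) k := by
          have : ({i ∈ Icc 1 k | i ≤ d j} : Finset ℕ) = Icc 1 (min (d j) k) := by
            ext; simp only [mem_filter, mem_Icc, le_min_iff]; omega
          rw [← card_filter, this, Nat.card_Icc, Nat.add_sub_cancel]
  rw [hswap, ← sum_Icc_add_sum_Icc g (Nat.zero_le k) hkn, sum_congr rfl htail]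
  gcongr
  calc ∑ j ∈ Icc (0 + 1) k, g j ≤ ∑ _j ∈ Icc 1 k, (k - 1) := sum_le_sum hhead
    _ = k * (k - 1) := by rw [sum_const, Nat.card_Icc, smul_eq_mul, Nat.add_sub_cancel]

lemma corrConj_succ_le {n k : ℕ} {d : ℕ → ℕ} (hkn : k + 1 ≤ n) (hk : k ≤ d k)
    (heq : d (k + 1) = d k) : corrConj n d (k + 1) ≤ corrConj n d k := by
  have hleft : #{j ∈ Icc 1 n | j < k + 1 ∧ k + 1 - 1 ≤ d j} ≤
      #{j ∈ Icc 1 n | j < k ∧ k - 1 ≤ d j} + 1 :=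
    calc _ ≤ #(insert k {j ∈ Icc 1 n | j < k ∧ k - 1 ≤ d j}) :=
          card_le_card fun j ↦ by simp only [mem_filter, mem_Icc, mem_insert]; omega
      _ ≤ _ := card_insert_le _ _
  have hright : #{j ∈ Icc 1 n | k + 1 < j ∧ k + 1 ≤ d j} + 1 ≤
      #{j ∈ Icc 1 n | k < j ∧ k ≤ d j} :=
    calc _ = #(insert (k + 1) {j ∈ Icc 1 n | k + 1 < j ∧ k + 1 ≤ d j}) :=
          (card_insert_of_notMem (by simp)).symm
      _ ≤ _ := card_le_card fun j ↦ by
          simp only [mem_insert, mem_filter, mem_Icc]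
          rintro (rfl | hj) <;> omega
  unfold corrConj
  omega

lemma sum_Icc_nonpos_of_nonpos_or_le_succ {δ : ℕ → ℤ} {m : ℕ}
    (h : ∀ k ∈ Icc 1 m, ∑ i ∈ Icc 1 k, δ i ≤ 0 ∨ (k < m ∧ δ k ≤ δ (k + 1))) :
    ∀ k ≤ m, ∑ i ∈ Icc 1 k, δ i ≤ 0 := by
  have hsucc : ∀ i, ∑ j ∈ Icc 1 (i + 1), δ j = ∑ j ∈ Icc 1 i, δ j + δ (i + 1) :=
    fun i ↦ sum_Icc_succ_top (by omega) δ
  by_contra! hpos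
  obtain ⟨k, ⟨hkm, hk⟩, hmin⟩ : ∃ k, (k ≤ m ∧ 0 < ∑ i ∈ Icc 1 k, δ i) ∧
      ∀ j < k, ¬(j ≤ m ∧ 0 < ∑ i ∈ Icc 1 j, δ i) :=
    ⟨Nat.find hpos, Nat.find_spec hpos, fun _ ↦ Nat.find_min hpos⟩
  rcases k with _ | k
  · simp at hk
  -- From the first positive partial sum on, the increments stay positive up to `m`.
  have hgrow : ∀ i, k + 1 ≤ i → i ≤ m → 0 < ∑ j ∈ Icc 1 i, δ j ∧ 0 < δ i := by
    intro i hi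
    induction i, hi using Nat.le_induction with
    | base =>
      intro _
      have hprev : ∑ j ∈ Icc 1 k, δ j ≤ 0 := by
        have := hmin k (by omega)
        rw [not_and, not_lt] at this
        exact this (by omega)
      rw [hsucc] at hk ⊢
      constructor <;> linarith
    | succ i hi ih =>
      intro him
      obtain ⟨hS, hδ⟩ := ih (by omega)
      rcases h i (mem_Icc.mpr ⟨by omega, by omega⟩) with h' | ⟨-, h'⟩
      · linarith
      · rw [hsucc]
        constructor <;> linarith
  obtain ⟨hS, -⟩ := hgrow m (by omega) le_rfl
  rcases h m (mem_Icc.mpr ⟨by omega, le_rfl⟩) with h' | ⟨h', -⟩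
  · linarith
  · omega

lemma bergeIneq_of_rightStrong {n m : ℕ} {d : ℕ → ℕ} (hd : AntitoneOn d (Set.Icc 1 n))
    (hmn : m ≤ n) (hms : m ≤ d m) (hBm : BergeIneq n d m)
    (hBrs : ∀ k, 1 ≤ k → k < m → k ≤ d k → d (k + 1) < d k → BergeIneq n d k) :
    ∀ k ≤ m, BergeIneq n d k := by
  set δ : ℕ → ℤ := fun i ↦ (d i : ℤ) - corrConj n d i
  have hiff : ∀ k, BergeIneq n d k ↔ ∑ i ∈ Icc 1 k, δ i ≤ 0 := fun k ↦ by
    simp only [BergeIneq, δ, sum_sub_distrib, sub_nonpos]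
    norm_cast
  intro k hk
  rw [hiff]
  refine sum_Icc_nonpos_of_nonpos_or_le_succ (fun k hk ↦ ?_) k hk
  rw [mem_Icc] at hk
  rcases hk.2.eq_or_lt with rfl | hkm
  · exact Or.inl ((hiff k).mp hBm)
  have hstrong : k ≤ d k := hk.2.trans (hms.trans (hd ⟨hk.1, by omega⟩ ⟨by omega, hmn⟩ hk.2))
  rcases (hd ⟨hk.1, by omega⟩ ⟨by omega, by omega⟩ (by omega : k ≤ k + 1)).lt_or_eq
    with hlt | heq
  · exact Or.inl ((hiff k).mp (hBrs k hk.1 hkm hstrong hlt))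
  · have := corrConj_succ_le (n := n) (by omega) hstrong heq
    refine Or.inr ⟨hkm, ?_⟩
    simp only [δ, heq]
    omega

lemma erdosGallaiIneq_of_bergeIneq {n k : ℕ} {d : ℕ → ℕ} (hkn : k ≤ n)
    (h : BergeIneq n d k) : ErdosGallaiIneq n d k :=
  h.trans (sum_corrConj_le hkn)

lemma erdosGallaiIneq_succ {n k : ℕ} {d : ℕ → ℕ} (hd : AntitoneOn d (Set.Icc 1 n))
    (hkn : k + 1 ≤ n) (hsmall : d (k + 1) ≤ k) (h : ErdosGallaiIneq n d k) :
    ErdosGallaiIneq n d (k + 1) := by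
  have hle : ∀ j ∈ Icc (k + 1) n, d j ≤ k := fun j hj ↦ by
    rw [mem_Icc] at hj
    exact (hd ⟨by omega, hkn⟩ ⟨by omega, hj.2⟩ hj.1).trans hsmall
  have htail : ∑ j ∈ Icc (k + 1) n, min (d j) k = ∑ j ∈ Icc (k + 1) n, d j :=
    sum_congr rfl fun j hj ↦ min_eq_left (hle j hj)
  have htail' : ∑ j ∈ Icc (k + 1 + 1) n, min (d j) (k + 1) = ∑ j ∈ Icc (k + 1 + 1) n, d j :=
    sum_congr rfl fun j hj ↦ min_eq_left ((hle j (by rw [mem_Icc] at hj ⊢; omega)).trans (by omega))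
  have hsplit := sum_Icc_add_sum_Icc d (by omega : k ≤ k + 1) hkn
  rw [Icc_self, sum_singleton] at hsplit
  unfold ErdosGallaiIneq at h ⊢
  rw [sum_Icc_succ_top (by omega), htail', Nat.add_sub_cancel]
  rw [htail] at h
  have e1 : (k + 1) * k = k * k + k := by ring
  have e2 := mul_sub_one_add_self k
  omega

lemma erdosGallaiIneq_of_bergeIneq_le {n m : ℕ} {d : ℕ → ℕ} (hd : AntitoneOn d (Set.Icc 1 n))
    (hBerge : ∀ k ≤ m, BergeIneq n d k) (hmax : ∀ i, 1 ≤ i → i ≤ n → i ≤ d i → i ≤ m) :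
    ∀ k ≤ n, ErdosGallaiIneq n d k := by
  intro k hkn
  induction k with
  | zero => exact erdosGallaiIneq_of_bergeIneq hkn (hBerge 0 m.zero_le)
  | succ k ih =>
    rcases le_or_gt (k + 1) m with hkm | hmk
    · exact erdosGallaiIneq_of_bergeIneq hkn (hBerge _ hkm)
    have hsmall : d (k + 1) ≤ k := by
      by_contra!
      have := hmax (k + 1) (by omega) hkn this
      omega
    exact erdosGallaiIneq_succ hd hkn hsmall (ih (by omega))

theorem stmt_17_general (n : ℕ) (d : ℕ → ℕ)
    (hmono : ∀ i j, 1 ≤ i → i ≤ j → j ≤ n → d j ≤ d i)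
    (heven : Even (∑ i ∈ Finset.Icc 1 n, d i))
    (m : ℕ) (hmn : m ≤ n) (hms : m ≤ d m)
    (hmax : ∀ i, 1 ≤ i → i ≤ n → i ≤ d i → i ≤ m)
    (hBm : ∑ i ∈ Finset.Icc 1 m, d i ≤ ∑ i ∈ Finset.Icc 1 m, corrConj n d i)
    (hBrs : ∀ k, 1 ≤ k → k ≤ n → k ≤ d k → (k = n ∨ d (k + 1) < d k) →
      ∑ i ∈ Finset.Icc 1 k, d i ≤ ∑ i ∈ Finset.Icc 1 k, corrConj n d i) :
    IsGraphic (List.ofFn fun i : Fin n => d (i.1 + 1)) := by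
  have hd : AntitoneOn d (Set.Icc 1 n) := fun i hi j hj hij ↦ hmono i j hi.1 hij hj.2
  have hBerge := bergeIneq_of_rightStrong hd hmn hms hBm
    fun k hk hkm hks hlt ↦ hBrs k hk (by omega) hks (Or.inr hlt)
  have hEG := erdosGallaiIneq_of_bergeIneq_le hd hBerge hmax
  obtain ⟨G, hG⟩ := exists_graph_of_erdosGallaiIneq hd heven fun k hk ↦ hEG k (mem_Icc.mp hk).2
  exact isGraphic_ofFn _ G hG

/-- Zverovich–Zverovich reduction: if the Berge inequality holds for `k = m`
(the maximum strong index) and for every right strong index `k` (a strong index `k`,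
i.e. `k ∈ [1..n]` with `d k ≥ k`, such that `k = n` or `d (k+1) < d k`), then `D`
is graphic. -/
theorem stmt_17 (n : ℕ) (d : ℕ → ℕ) (hn : 1 ≤ n)
    (hpos : ∀ i, 1 ≤ i → i ≤ n → 1 ≤ d i)
    (hmono : ∀ i j, 1 ≤ i → i ≤ j → j ≤ n → d j ≤ d i)
    (heven : Even (∑ i ∈ Finset.Icc 1 n, d i))
    (m : ℕ) (hm1 : 1 ≤ m) (hmn : m ≤ n) (hms : m ≤ d m)
    (hmax : ∀ i, 1 ≤ i → i ≤ n → i ≤ d i → i ≤ m)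
    (hBm : ∑ i ∈ Finset.Icc 1 m, d i ≤ ∑ i ∈ Finset.Icc 1 m, corrConj n d i)
    (hBrs : ∀ k, 1 ≤ k → k ≤ n → k ≤ d k → (k = n ∨ d (k + 1) < d k) →
      ∑ i ∈ Finset.Icc 1 k, d i ≤ ∑ i ∈ Finset.Icc 1 k, corrConj n d i) :
    IsGraphic (List.ofFn fun i : Fin n => d (i.1 + 1)) :=
  stmt_17_general n d hmono heven m hmn hms hmax hBm hBrs
end
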